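/- For Laurent polynomials F and G in two variables over an integral domain R, the Newton polygon of the product FG equals the Minkowski sum of the Newton polygons of F and G. -/

import Mathlib

open Pointwise

/-- The embedding of exponent vectors `ℤ × ℤ` into `ℝ × ℝ`. -/
noncomputable def expEmbed (p : ℤ × ℤ) : ℝ × ℝ := ((p.1 : ℝ), (p.2 : ℝ))

/-- The Newton polygon of a Laurent polynomial in two variables (an element of
the group algebra `R[ℤ × ℤ] = R[x, y, x⁻¹, y⁻¹]`): the convex hull in `ℝ²`
of its support. -/
noncomputable def newtonPolygon {R : Type*} [CommRing R]
    (F : AddMonoidAlgebra R (ℤ × ℤ)) : Set (ℝ × ℝ) :=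
  convexHull ℝ (expEmbed '' (F.coeff.support : Set (ℤ × ℤ)))

lemma expEmbed_add (p q : ℤ × ℤ) : expEmbed (p + q) = expEmbed p + expEmbed q := by
  simp [expEmbed, Prod.ext_iff]

lemma expEmbed_injective : Function.Injective expEmbed := by
  intro p q h
  simp only [expEmbed, Prod.ext_iff] at h
  exact Prod.ext (by exact_mod_cast h.1) (by exact_mod_cast h.2)

lemma expEmbed_image_add (s t : Set (ℤ × ℤ)) :
    expEmbed '' (s + t) = expEmbed '' s + expEmbed '' t := by
  ext z
  constructor
  · rintro ⟨_, ⟨a, ha, b, hb, rfl⟩, rfl⟩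
    exact ⟨expEmbed a, ⟨a, ha, rfl⟩, expEmbed b, ⟨b, hb, rfl⟩, (expEmbed_add a b).symm⟩
  · rintro ⟨_, ⟨a, ha, rfl⟩, _, ⟨b, hb, rfl⟩, rfl⟩
    exact ⟨a + b, ⟨a, ha, b, hb, rfl⟩, expEmbed_add a b⟩

/-- For Laurent polynomials `F`, `G` in two variables over an integral domain,
the Newton polygon of `F * G` is the Minkowski sum of the Newton polygons of
`F` and `G`. -/
theorem newtonPolygon_mul {R : Type*} [CommRing R] [IsDomain R]
    (F G : AddMonoidAlgebra R (ℤ × ℤ)) (hF : F ≠ 0) (hG : G ≠ 0) :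
    newtonPolygon (F * G) = newtonPolygon F + newtonPolygon G := by
  classical
  set A : Set (ℝ × ℝ) := expEmbed '' (F.coeff.support : Set (ℤ × ℤ)) with hA
  set B : Set (ℝ × ℝ) := expEmbed '' (G.coeff.support : Set (ℤ × ℤ)) with hB
  have hsum : newtonPolygon F + newtonPolygon G = convexHull ℝ (A + B) := by
    rw [newtonPolygon, newtonPolygon, convexHull_add]
  -- key: extreme points of convexHull (A + B) are in the support of F * G
  have hext : (convexHull ℝ (A + B)).extremePoints ℝ ⊆
      expEmbed '' ((F * G).coeff.support : Set (ℤ × ℤ)) := by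
    intro q hq
    have hqAB : q ∈ A + B := extremePoints_convexHull_subset hq
    obtain ⟨_, ⟨a, ha, rfl⟩, _, ⟨b, hb, rfl⟩, rfl⟩ := hqAB
    -- uniqueness of the decomposition
    have huniq : ∀ x ∈ F.coeff.support, ∀ y ∈ G.coeff.support, x + y = a + b → x = a ∧ y = b := by
      intro x hx y hy hxy
      have h1 : expEmbed x + expEmbed b ∈ convexHull ℝ (A + B) :=
        subset_convexHull ℝ _ ⟨expEmbed x, ⟨x, hx, rfl⟩, expEmbed b, ⟨b, hb, rfl⟩, rfl⟩
      have h2 : expEmbed a + expEmbed y ∈ convexHull ℝ (A + B) :=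
        subset_convexHull ℝ _ ⟨expEmbed a, ⟨a, ha, rfl⟩, expEmbed y, ⟨y, hy, rfl⟩, rfl⟩
      have hmid : expEmbed a + expEmbed b ∈
          openSegment ℝ (expEmbed x + expEmbed b) (expEmbed a + expEmbed y) := by
        refine ⟨1/2, 1/2, by norm_num, by norm_num, by norm_num, ?_⟩
        have : expEmbed x + expEmbed y = expEmbed a + expEmbed b := by
          rw [← expEmbed_add, ← expEmbed_add, hxy]
        have h2' : expEmbed y = expEmbed a + expEmbed b - expEmbed x := by
          rw [← this]; abel
        rw [h2']
        module
      have := (mem_extremePoints.mp hq).2 _ h1 _ h2 hmid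
      have hxa : expEmbed x = expEmbed a := by
        have := this.1
        have : expEmbed x + expEmbed b = expEmbed a + expEmbed b := this
        exact add_right_cancel this
      have hx' : x = a := expEmbed_injective hxa
      refine ⟨hx', ?_⟩
      have : x + y = a + b := hxy
      rw [hx'] at this
      exact add_left_cancel this
    -- the coefficient of F * G at a + b equals F a * G b
    have hcoeff : (F * G).coeff (a + b) = F.coeff a * G.coeff b := by
      rw [AddMonoidAlgebra.coeff_mul]
      simp only [Finsupp.sum]
      rw [Finset.sum_eq_single a]
      · rw [Finset.sum_eq_single b]
        · simp
        · intro y hy hyb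
          rw [if_neg]
          intro h
          exact hyb (huniq a ha y hy h).2
        · intro hbs
          exact absurd hb hbs
      · intro x hx hxa
        apply Finset.sum_eq_zero
        intro y hy
        rw [if_neg]
        intro h
        exact hxa (huniq x hx y hy h).1
      · intro has
        exact absurd ha has
    have hne : (F * G).coeff (a + b) ≠ 0 := by
      rw [hcoeff]
      exact mul_ne_zero (Finsupp.mem_support_iff.mp ha) (Finsupp.mem_support_iff.mp hb)
    exact ⟨a + b, Finsupp.mem_support_iff.mpr hne, expEmbed_add a b⟩
  -- forward inclusion
  have hforward : newtonPolygon (F * G) ⊆ convexHull ℝ (A + B) := by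
    rw [newtonPolygon]
    apply convexHull_mono
    refine (Set.image_mono ?_).trans (expEmbed_image_add _ _).subset
    exact_mod_cast Finset.coe_subset.mpr (AddMonoidAlgebra.support_coeff_mul_subset F G)
  -- reverse inclusion via Krein–Milman
  have hAfin : A.Finite := (F.coeff.support.finite_toSet).image _
  have hBfin : B.Finite := (G.coeff.support.finite_toSet).image _
  have hABfin : (A + B).Finite := hAfin.add hBfin
  have hcompact : IsCompact (convexHull ℝ (A + B)) := hABfin.isCompact_convexHull ℝ
  have hback : convexHull ℝ (A + B) ⊆ newtonPolygon (F * G) := by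
    have hclosed : IsClosed (newtonPolygon (F * G)) :=
      ((((F * G).coeff.support.finite_toSet).image _).isCompact_convexHull ℝ).isClosed
    calc convexHull ℝ (A + B)
        = closure (convexHull ℝ ((convexHull ℝ (A + B)).extremePoints ℝ)) :=
          (closure_convexHull_extremePoints hcompact (convex_convexHull ℝ _)).symm
      _ ⊆ closure (newtonPolygon (F * G)) :=
          closure_mono (convexHull_min (hext.trans (subset_convexHull ℝ _)) (convex_convexHull ℝ _))
      _ = newtonPolygon (F * G) := hclosed.closure_eq
  rw [hsum]
  exact subset_antisymm hforward hback
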